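/- If F, G : V → V are Fréchet differentiable mixed-logarithmic homogeneous operators with logarithmic indices (p_F, q_F) and (p_G, q_G), then the bracket [F,G](φ) := DF(φ)(G(φ)) - DG(φ)(F(φ)) is mixed-logarithmic homogeneous with logarithmic indices given by the commutator [(p_F,q_F),(p_G,q_G)] in the mixed-power index algebra, i.e. (p_F,q_F)(p_G,q_G) - (p_G,q_G)(p_F,q_F) where (a,b)(c,d) = (a·Re c + i·b·Im c, b·Re d + i·a·Im d). -/

import Mathlib

/-!
Write `L_(p,q) w = p·Re w + i·q·Im w`; the homogeneity identity reads
`H(kφ) = k·H(φ) + k·L_(p,q)(log k)·φ`, and `idxMul` is exactly composition of these ℝ-linear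
maps. Since `log` is additive on the right half-plane, the set of `k` there at which the identity
holds is open; by continuity it is also relatively closed, so by connectedness the identity holds
for every `k` with `0 < Re k`, for all `φ` at once. Differentiating in `φ` gives
`DH(kφ)(kv) = k·DH(φ)v + k·L(log k)·v`, and differentiating in `k` at `1` gives the Euler identity
`DH(φ)(wφ) = w·H(φ) + L(w)·φ`. Expanding `DF(kφ)(G(kφ))` with these, every term symmetric in
`F` and `G` cancels in the bracket, leaving `k·(L_F L_G - L_G L_F)(log k)·φ`.
-/

/-- The product on index pairs: `(a,b)(c,d) = (a·Re c + i·b·Im c, b·Re d + i·a·Im d)`. -/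
noncomputable def idxMul (p q : ℂ × ℂ) : ℂ × ℂ :=
  (p.1 * (q.1.re : ℂ) + Complex.I * p.2 * (q.1.im : ℂ),
   p.2 * (q.2.re : ℂ) + Complex.I * p.1 * (q.2.im : ℂ))

/-- The commutator bracket on index pairs. -/
noncomputable def idxBracket (p q : ℂ × ℂ) : ℂ × ℂ :=
  idxMul p q - idxMul q p

/-- Mixed-logarithmic homogeneity of `H : V → V` with indices `(p,q)`:
`H(kφ) = k·H(φ) + k·(p·ln|k| + i·q·arg k)·φ` for all `φ` and all complex `k` near `1`. -/
def MLHom {V : Type*} [NormedAddCommGroup V] [NormedSpace ℂ V]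
    (H : V → V) (p q : ℂ) : Prop :=
  ∀ φ : V, ∀ᶠ k in nhds (1 : ℂ), H (k • φ) =
    k • H φ + (k * (p * Real.log ‖k‖ + Complex.I * q * k.arg)) • φ

open Complex Filter Topology

noncomputable def idxMap (a : ℂ × ℂ) : ℂ →L[ℝ] ℂ :=
  a.1 • (ofRealCLM ∘L reCLM) + (I * a.2) • (ofRealCLM ∘L imCLM)

@[simp] lemma idxMap_apply (a : ℂ × ℂ) (w : ℂ) :
    idxMap a w = a.1 * w.re + I * a.2 * w.im := rfl

lemma idxMap_sub (a b : ℂ × ℂ) : idxMap (a - b) = idxMap a - idxMap b := by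
  ext w
  simp only [idxMap_apply, Prod.fst_sub, Prod.snd_sub, sub_apply]
  ring

lemma idxMap_idxMul (a b : ℂ × ℂ) : idxMap (idxMul a b) = idxMap a ∘L idxMap b := by
  ext w
  simp only [idxMap_apply, idxMul, ContinuousLinearMap.comp_apply, mul_re, mul_im, add_re, add_im,
    I_re, I_im, ofReal_re, ofReal_im]
  push_cast
  linear_combination (a.1 * b.2.im * w.im) * I_sq

lemma idxMap_idxBracket (a b : ℂ × ℂ) :
    idxMap (idxBracket a b) = idxMap a ∘L idxMap b - idxMap b ∘L idxMap a := by
  rw [idxBracket, idxMap_sub, idxMap_idxMul, idxMap_idxMul]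

lemma idxMap_log (a : ℂ × ℂ) (k : ℂ) :
    idxMap a (log k) = a.1 * Real.log ‖k‖ + I * a.2 * k.arg := by
  rw [idxMap_apply, log_re, log_im]

lemma log_mul_of_re_pos {x y : ℂ} (hx : 0 < x.re) (hy : 0 < y.re) :
    log (x * y) = log x + log y := by
  have hx' := abs_lt.1 (abs_arg_lt_pi_div_two_iff.2 (Or.inl hx))
  have hy' := abs_lt.1 (abs_arg_lt_pi_div_two_iff.2 (Or.inl hy))
  refine log_mul (by rintro rfl; simp at hx) (by rintro rfl; simp at hy) ⟨?_, ?_⟩ <;>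
    linarith [Real.pi_pos]

lemma hasFDerivAt_log_one : HasFDerivAt log (ContinuousLinearMap.id ℝ ℂ) 1 := by
  have := ((hasDerivAt_log one_mem_slitPlane).hasFDerivAt).restrictScalars ℝ
  exact this.congr_fderiv (by ext; simp)

lemma hasFDerivAt_mul_idxMap_log (a : ℂ × ℂ) :
    HasFDerivAt (fun k : ℂ => k * idxMap a (log k)) (idxMap a) 1 := by
  have := (hasFDerivAt_id (1 : ℂ)).mul ((idxMap a).hasFDerivAt.comp 1 hasFDerivAt_log_one)
  exact this.congr_fderiv (by ext; simp)

section
variable {V : Type*} [NormedAddCommGroup V] [NormedSpace ℂ V]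

def MLHomAt (H : V → V) (p q k : ℂ) (φ : V) : Prop :=
  H (k • φ) = k • H φ + (k * idxMap (p, q) (log k)) • φ

lemma mlHom_iff_eventually_mlHomAt {H : V → V} {p q : ℂ} :
    MLHom H p q ↔ ∀ φ, ∀ᶠ k in 𝓝 1, MLHomAt H p q k φ := by
  refine forall_congr' fun φ => ?_
  simp only [MLHomAt, idxMap_log]

lemma eventually_re_pos_nhds_one : ∀ᶠ k : ℂ in 𝓝 1, 0 < k.re :=
  continuousAt_const.eventually_lt continuous_re.continuousAt (by simp)

lemma eventually_not_mlHomAt {H : V → V} {p q : ℂ} (hc : Continuous H) {k : ℂ}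
    (hk : k ∈ slitPlane) {φ : V} (h : ¬ MLHomAt H p q k φ) :
    ∀ᶠ k' in 𝓝 k, ¬ MLHomAt H p q k' φ := by
  have hlog : ContinuousAt log k := continuousAt_clog hk
  have hcont : ContinuousAt
      (fun k' : ℂ => H (k' • φ) - (k' • H φ + (k' * idxMap (p, q) (log k')) • φ)) k := by
    fun_prop
  filter_upwards [hcont.eventually_ne (sub_ne_zero.2 h)] with k' hk'
  exact fun h' => hk' (sub_eq_zero.2 h')

namespace MLHom

variable {H : V → V} {p q : ℂ}

lemma eventually_mlHomAt (hH : MLHom H p q) {k : ℂ} (hk : 0 < k.re) {φ : V}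
    (h : MLHomAt H p q k φ) : ∀ᶠ k' in 𝓝 k, MLHomAt H p q k' φ := by
  have hk0 : k ≠ 0 := by rintro rfl; simp at hk
  have hmap := (Homeomorph.mulRight₀ k hk0).map_nhds_eq 1
  simp only [Homeomorph.coe_mulRight₀, one_mul] at hmap
  rw [← hmap, eventually_map]
  filter_upwards [mlHom_iff_eventually_mlHomAt.1 hH (k • φ), eventually_re_pos_nhds_one]
    with k' hk' hk're
  simp only [MLHomAt] at hk' h ⊢
  rw [mul_smul, hk', h, log_mul_of_re_pos hk're hk, map_add]
  module

lemma mlHomAt_of_re_pos (hH : MLHom H p q) (hc : Continuous H) {k : ℂ} (hk : 0 < k.re)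
    (φ : V) : MLHomAt H p q k φ := by
  refine ((convex_halfSpace_re_gt 0).isPreconnected.induction₂
    (fun z z' => MLHomAt H p q z φ ↔ MLHomAt H p q z' φ) (fun z hz => ?_)
    (fun _ _ _ _ _ _ => Iff.trans) (fun _ _ _ _ => Iff.symm)
    (show (0 : ℝ) < (1 : ℂ).re by simp) hk).1 ?_
  · refine Eventually.filter_mono nhdsWithin_le_nhds ?_
    by_cases h : MLHomAt H p q z φ
    · filter_upwards [hH.eventually_mlHomAt hz h] with z' h' using iff_of_true h h'
    · filter_upwards [eventually_not_mlHomAt hc (Or.inl hz) h] with z' h'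
        using iff_of_false h h'
  · exact (mlHom_iff_eventually_mlHomAt.1 hH φ).self_of_nhds

lemma deriv_apply_smul_self (hH : MLHom H p q) {φ : V} {D : V →L[ℝ] V}
    (hD : HasFDerivAt H D φ) (w : ℂ) :
    D (w • φ) = w • H φ + idxMap (p, q) w • φ := by
  have hL : HasFDerivAt (fun k : ℂ => H (k • φ))
      (D ∘L (ContinuousLinearMap.id ℝ ℂ).smulRight φ) 1 := by
    rw [← one_smul ℂ φ] at hD
    exact hD.comp (1 : ℂ) ((hasFDerivAt_id (1 : ℂ)).smul_const φ)
  have hR : HasFDerivAt (fun k : ℂ => k • H φ + (k * idxMap (p, q) (log k)) • φ)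
      ((ContinuousLinearMap.id ℝ ℂ).smulRight (H φ) + (idxMap (p, q)).smulRight φ) 1 :=
    ((hasFDerivAt_id (1 : ℂ)).smul_const (H φ)).add
      ((hasFDerivAt_mul_idxMap_log (p, q)).smul_const φ)
  simpa using congr($(hL.unique (hR.congr_of_eventuallyEq
    (mlHom_iff_eventually_mlHomAt.1 hH φ))) w)

lemma deriv_smul_apply_smul (hH : MLHom H p q) (hc : Continuous H) {k : ℂ} (hk : 0 < k.re)
    {φ : V} {D D' : V →L[ℝ] V} (hD : HasFDerivAt H D φ) (hD' : HasFDerivAt H D' (k • φ))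
    (v : V) : D' (k • v) = k • D v + (k * idxMap (p, q) (log k)) • v := by
  have hL : HasFDerivAt (fun ψ => H (k • ψ)) (D' ∘L (k • ContinuousLinearMap.id ℝ V)) φ :=
    hD'.comp φ ((hasFDerivAt_id φ).const_smul k)
  have hR : HasFDerivAt (fun ψ => k • H ψ + (k * idxMap (p, q) (log k)) • ψ)
      (k • D + (k * idxMap (p, q) (log k)) • ContinuousLinearMap.id ℝ V) φ :=
    (hD.const_smul k).add ((hasFDerivAt_id φ).const_smul _)
  have hfun : (fun ψ => H (k • ψ)) = fun ψ => k • H ψ + (k * idxMap (p, q) (log k)) • ψ :=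
    funext (hH.mlHomAt_of_re_pos hc hk)
  rw [hfun] at hL
  simpa using congr($(hL.unique hR) v)

lemma deriv_smul_apply_smul_image {K : V → V} {p' q' : ℂ} (hH : MLHom H p q)
    (hK : MLHom K p' q') (hcH : Continuous H) (hcK : Continuous K) {k : ℂ} (hk : 0 < k.re)
    {φ : V} {D D' : V →L[ℝ] V} (hD : HasFDerivAt H D φ) (hD' : HasFDerivAt H D' (k • φ)) :
    D' (K (k • φ)) = k • D (K φ) + (k * idxMap (p, q) (log k)) • K φ
      + (k * idxMap (p', q') (log k)) • H φ
      + (k * (idxMap (p, q) (idxMap (p', q') (log k))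
        + idxMap (p, q) (log k) * idxMap (p', q') (log k))) • φ := by
  rw [hK.mlHomAt_of_re_pos hcK hk φ, map_add, mul_smul,
    hH.deriv_smul_apply_smul hcH hk hD hD', hH.deriv_smul_apply_smul hcH hk hD hD',
    hH.deriv_apply_smul_self hD]
  module

end MLHom
end

/-- If `F, G` are Fréchet differentiable (over `ℝ`) mixed-logarithmic homogeneous operators
with indices `(p_F,q_F)` and `(p_G,q_G)`, then the bracket
`[F,G](φ) = DF(φ)(G(φ)) - DG(φ)(F(φ))` is mixed-logarithmic homogeneous with indices the
commutator `[(p_F,q_F),(p_G,q_G)]` in the mixed-power index algebra. -/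
theorem bracket_MLHom
    {V : Type*} [NormedAddCommGroup V] [NormedSpace ℂ V]
    (F G : V → V) (pF qF pG qG : ℂ)
    (DF DG : V → V →L[ℝ] V)
    (hDF : ∀ φ, HasFDerivAt F (DF φ) φ)
    (hDG : ∀ φ, HasFDerivAt G (DG φ) φ)
    (hF : MLHom F pF qF) (hG : MLHom G pG qG) :
    MLHom (fun φ => DF φ (G φ) - DG φ (F φ))
      (idxBracket (pF, qF) (pG, qG)).1 (idxBracket (pF, qF) (pG, qG)).2 := by
  have hcF : Continuous F := continuous_iff_continuousAt.2 fun φ => (hDF φ).continuousAt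
  have hcG : Continuous G := continuous_iff_continuousAt.2 fun φ => (hDG φ).continuousAt
  refine mlHom_iff_eventually_mlHomAt.2 fun φ => ?_
  filter_upwards [eventually_re_pos_nhds_one] with k hk
  simp only [MLHomAt, Prod.mk.eta, idxMap_idxBracket]
  rw [hF.deriv_smul_apply_smul_image hG hcF hcG hk (hDF φ) (hDF (k • φ)),
    hG.deriv_smul_apply_smul_image hF hcG hcF hk (hDG φ) (hDG (k • φ))]
  simp only [sub_apply, ContinuousLinearMap.comp_apply]
  module
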